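/- Let q_p be the quadratic form q_p(v) = (1/ε²)∫_{-1}^{1}|v'(t)|² dt + ∫_{-1}^{1} (p²/h_ε(t)² + Y_ε⁰(t)) |v(t)|² dt on H¹₀(-1,1). Then for every normalized v ∈ H¹₀(-1,1), q_p(v) ≥ p²/(1+γ²ε²) - ε²γ⁴. -/

import Mathlib

/-!
The kinetic term is nonnegative, so it suffices to bound the potential from below on `[-1, 1]`
and integrate against the probability density `v²`. There, `p²/h_ε² ≥ p²/h_ε(1)²`, the term
`γ²/(2h_ε²)` is nonnegative, and `3γ⁴ε²t²/(4h_ε⁴) ≤ ε²γ⁴` because `t² ≤ 1 ≤ h_ε⁴`.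
-/

open intervalIntegral Set

/-- `p²/h_ε(t)² + Y_ε⁰(t)`, with `h_ε(t)² = 1 + γ²ε²t²`. -/
noncomputable def fiberPotential (γ ε p t : ℝ) : ℝ :=
  p ^ 2 / (1 + γ ^ 2 * ε ^ 2 * t ^ 2)
    + (-(3 * γ ^ 4 * ε ^ 2 * t ^ 2) / (4 * (1 + γ ^ 2 * ε ^ 2 * t ^ 2) ^ 2)
        + γ ^ 2 / (2 * (1 + γ ^ 2 * ε ^ 2 * t ^ 2)))

theorem continuous_fiberPotential (γ ε p : ℝ) : Continuous (fiberPotential γ ε p) := by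
  unfold fiberPotential
  fun_prop (disch := intro t; positivity)

theorem fiberPotential_ge {t : ℝ} (γ ε p : ℝ) (ht : t ^ 2 ≤ 1) :
    p ^ 2 / (1 + γ ^ 2 * ε ^ 2) - ε ^ 2 * γ ^ 4 ≤ fiberPotential γ ε p t := by
  set x := γ ^ 2 * ε ^ 2 * t ^ 2
  have hx : 0 ≤ x := by positivity
  have hx_le : x ≤ γ ^ 2 * ε ^ 2 := mul_le_of_le_one_right (by positivity) ht
  have hmain : p ^ 2 / (1 + γ ^ 2 * ε ^ 2) ≤ p ^ 2 / (1 + x) :=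
    div_le_div_of_nonneg_left (sq_nonneg p) (by positivity) (by linarith)
  have hY : -(ε ^ 2 * γ ^ 4) ≤ -(3 * γ ^ 4 * ε ^ 2 * t ^ 2) / (4 * (1 + x) ^ 2) := by
    rw [le_div_iff₀ (by positivity)]
    have he : 0 ≤ ε ^ 2 * γ ^ 4 := by positivity
    have hsq : 1 ≤ (1 + x) ^ 2 := by nlinarith
    nlinarith [mul_le_mul_of_nonneg_left ht he, mul_le_mul_of_nonneg_left hsq he]
  have hrest : 0 ≤ γ ^ 2 / (2 * (1 + x)) := by positivity
  unfold fiberPotential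
  linarith

theorem const_mul_integral_le_integral_mul_of_le {W f : ℝ → ℝ} {a b c : ℝ} (hab : a ≤ b)
    (hW : ContinuousOn W (Icc a b)) (hf : IntervalIntegrable f MeasureTheory.volume a b)
    (hf_nonneg : ∀ t ∈ Icc a b, 0 ≤ f t) (hcW : ∀ t ∈ Icc a b, c ≤ W t) :
    c * ∫ t in a..b, f t ≤ ∫ t in a..b, W t * f t := by
  rw [← integral_const_mul]
  refine integral_mono_on hab (hf.const_mul c) (hf.continuousOn_mul ?_) fun t ht ↦
    mul_le_mul_of_nonneg_right (hcW t ht) (hf_nonneg t ht)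
  rwa [uIcc_of_le hab]

theorem stmt_6 (γ ε p : ℝ)
    (v : ℝ → ℝ)
    (hnorm : (∫ t in (-1 : ℝ)..1, v t ^ 2) = 1) :
    (1 / ε ^ 2) * (∫ t in (-1 : ℝ)..1, deriv v t ^ 2)
      + (∫ t in (-1 : ℝ)..1,
          (p ^ 2 / (1 + γ ^ 2 * ε ^ 2 * t ^ 2)
            + (-(3 * γ ^ 4 * ε ^ 2 * t ^ 2) / (4 * (1 + γ ^ 2 * ε ^ 2 * t ^ 2) ^ 2)
                + γ ^ 2 / (2 * (1 + γ ^ 2 * ε ^ 2 * t ^ 2)))) * v t ^ 2)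
      ≥ p ^ 2 / (1 + γ ^ 2 * ε ^ 2) - ε ^ 2 * γ ^ 4 := by
  have hkinetic : 0 ≤ (1 / ε ^ 2) * ∫ t in (-1 : ℝ)..1, deriv v t ^ 2 :=
    mul_nonneg (by positivity) (integral_nonneg (by norm_num) fun t _ ↦ sq_nonneg _)
  have hv : IntervalIntegrable (fun t ↦ v t ^ 2) MeasureTheory.volume (-1) 1 :=
    intervalIntegrable_of_integral_ne_zero (by rw [hnorm]; exact one_ne_zero)
  have hpotential := const_mul_integral_le_integral_mul_of_le (by norm_num)
    (continuous_fiberPotential γ ε p).continuousOn hv (fun t _ ↦ sq_nonneg (v t))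
    (c := p ^ 2 / (1 + γ ^ 2 * ε ^ 2) - ε ^ 2 * γ ^ 4)
    fun t ht ↦ fiberPotential_ge γ ε p (by nlinarith [ht.1, ht.2])
  rw [hnorm, mul_one] at hpotential
  unfold fiberPotential at hpotential
  linarith
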